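/- Krylov locality of Lanczos vectors: Let A be an n×n Hermitian complex matrix, let m ≥ 0, k ≥ 1, set N = m+1+k, and let (V_N, T_N, β_N, v_{N+1}) be a Lanczos relation of length N for A. Then for every integer j with 0 ≤ j ≤ k, A^j v_{m+1} = V_N T_N^j e_{m+1}, where v_{m+1} is the (m+1)-st column of V_N and e_{m+1} ∈ ℝ^N is the (m+1)-st standard basis vector. -/
import Mathlib


open Matrix

/-- A Lanczos relation of length `k` for an `n × n` Hermitian matrix `A` over `𝕜`
with starting unit vector `v`: orthonormal columns `V` with first column `v`, a real
symmetric tridiagonal matrix `T` with positive subdiagonal, `β > 0` and a unit vector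
`vNext` orthogonal to the columns of `V`, such that `A V = V T + β vNext eₖ*`. -/
structure LanczosRelation (𝕜 : Type) [RCLike 𝕜] (n k : ℕ)
    (A : Matrix (Fin n) (Fin n) 𝕜) (v : Fin n → 𝕜) where
  kpos : 0 < k
  V : Matrix (Fin n) (Fin k) 𝕜
  T : Matrix (Fin k) (Fin k) ℝ
  β : ℝ
  vNext : Fin n → 𝕜
  orthonormal : Vᴴ * V = 1
  firstCol : (fun i => V i ⟨0, kpos⟩) = v
  symm : T.IsHermitian
  tridiag : ∀ i j : Fin k, (i : ℕ) + 1 < (j : ℕ) → T i j = 0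
  subdiag_pos : ∀ (i : ℕ) (h : i + 1 < k), 0 < T ⟨i + 1, h⟩ ⟨i, by omega⟩
  β_pos : 0 < β
  vNext_unit : star vNext ⬝ᵥ vNext = 1
  vNext_orth : Vᴴ *ᵥ vNext = 0
  relation : A * V = V * T.map (algebraMap ℝ 𝕜) +
      (algebraMap ℝ 𝕜 β) • vecMulVec vNext (Pi.single ⟨k - 1, by omega⟩ 1)


lemma lanczos_band_lemma {k : ℕ} (T : Matrix (Fin k) (Fin k) ℝ)
    (hsymm : T.IsHermitian)
    (htri : ∀ i j : Fin k, (i : ℕ) + 1 < (j : ℕ) → T i j = 0) :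
    ∀ p : ℕ, ∀ i j : Fin k, (j : ℕ) + p < (i : ℕ) → (T ^ p) i j = 0 := by
  intro p
  induction p with
  | zero =>
    intro i j h
    simp only [pow_zero, Matrix.one_apply]
    rw [if_neg]
    intro e; subst e; omega
  | succ p ih =>
    intro i j h
    rw [pow_succ', Matrix.mul_apply]
    apply Finset.sum_eq_zero
    intro l _
    by_cases hl : (l : ℕ) + 1 < (i : ℕ)
    · have : T i l = 0 := by
        have := hsymm.apply l i
        have h2 := htri l i hl
        simp only [RCLike.star_def, starRingEnd_apply, star_trivial] at this
        rw [← this] at h2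
        simp [h2]
      simp [this]
    · have : (j : ℕ) + p < (l : ℕ) := by omega
      rw [ih l j this, mul_zero]

/-- **Krylov locality of Lanczos vectors**: for a Lanczos relation of length `N = m+1+k`
for the Hermitian matrix `A`, the Krylov vectors `Aʲ v_{m+1}` for `j ≤ k` stay inside the
range of `V_N` and are given by `Aʲ v_{m+1} = V_N (T_Nʲ e_{m+1})`. -/
theorem lanczos_krylov_locality
    {n m k : ℕ} (hk : 1 ≤ k)
    {A : Matrix (Fin n) (Fin n) ℂ} (hA : A.IsHermitian)
    {v₁ : Fin n → ℂ} (L : LanczosRelation ℂ n (m + 1 + k) A v₁) :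
    ∀ j : ℕ, j ≤ k →
      (A ^ j) *ᵥ (fun i => L.V i ⟨m, by omega⟩)
        = L.V *ᵥ (fun i : Fin (m + 1 + k) => (((L.T ^ j) i ⟨m, by omega⟩ : ℝ) : ℂ)) := by
  intro j hj
  induction j with
  | zero =>
    funext i
    simp only [pow_zero, Matrix.one_mulVec, Matrix.mulVec, dotProduct,
      Matrix.one_apply]
    rw [Finset.sum_eq_single (⟨m, by omega⟩ : Fin (m + 1 + k))]
    · simp
    · intro b _ hb
      rw [if_neg hb]
      simp
    · simp
  | succ j ih =>
    have hjk : j ≤ k := by omega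
    have ih' := ih hjk
    have hzero : (Matrix.vecMulVec L.vNext
        (Pi.single (⟨m + 1 + k - 1, by omega⟩ : Fin (m + 1 + k)) 1)) *ᵥ
        (fun i : Fin (m + 1 + k) => (((L.T ^ j) i ⟨m, by omega⟩ : ℝ) : ℂ)) = 0 := by
      funext i
      simp only [Matrix.mulVec, dotProduct, Matrix.vecMulVec_apply, Pi.zero_apply]
      rw [Finset.sum_eq_zero]
      intro b _
      by_cases hb : b = (⟨m + 1 + k - 1, by omega⟩ : Fin (m + 1 + k))
      · subst hb
        have hz : (L.T ^ j) ⟨m + 1 + k - 1, by omega⟩ ⟨m, by omega⟩ = 0 := by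
          apply lanczos_band_lemma L.T L.symm L.tridiag
          simp; omega
        rw [hz]
        simp
      · rw [Pi.single_eq_of_ne hb]
        simp
    have hT : (L.T.map (algebraMap ℝ ℂ)) *ᵥ
        (fun i : Fin (m + 1 + k) => (((L.T ^ j) i ⟨m, by omega⟩ : ℝ) : ℂ))
        = (fun i : Fin (m + 1 + k) => (((L.T ^ (j + 1)) i ⟨m, by omega⟩ : ℝ) : ℂ)) := by
      funext i
      simp only [Matrix.mulVec, dotProduct, Matrix.map_apply]
      have h1 : ((L.T ^ (j + 1)) i ⟨m, by omega⟩ : ℝ) =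
          ∑ l, L.T i l * (L.T ^ j) l ⟨m, by omega⟩ := by
        rw [pow_succ', Matrix.mul_apply]
      rw [h1]
      push_cast
      rfl
    rw [pow_succ', ← Matrix.mulVec_mulVec, ih', Matrix.mulVec_mulVec, L.relation,
      Matrix.add_mulVec, Matrix.smul_mulVec, ← Matrix.mulVec_mulVec,
      hT, hzero, smul_zero, add_zero]
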